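/- arXiv:1810.11693 — 2 statements merged into one kernel-verified Lean document; each statement's English description precedes it below -/
import Mathlib

section
/- Let p = N(μ, Σ) be a nondegenerate multivariate Gaussian on ℝ^d. The linear span of the functions {x ↦ (Σ^{-1}(μ − x))_j x_k + δ_{jk} : j,k ∈ [d]} ∪ {x ↦ (Σ^{-1}(μ − x))_j : j ∈ [d]} ∪ {1} equals the space Poly(2) of all polynomials on ℝ^d of total degree at most 2 (i.e., functions x ↦ xᵀ A x + bᵀ x + c). -/
open Finset

/-- The set of polynomials of total degree ≤ 2 on `ℝ^d`, as a submodule. -/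
def poly2Submodule (d : ℕ) : Submodule ℝ ((Fin d → ℝ) → ℝ) where
  carrier := {f : (Fin d → ℝ) → ℝ |
        ∃ (A : Matrix (Fin d) (Fin d) ℝ) (b : Fin d → ℝ) (c : ℝ),
          ∀ x : Fin d → ℝ,
            f x = (∑ i : Fin d, ∑ i' : Fin d, A i i' * x i * x i')
              + (∑ i : Fin d, b i * x i) + c}
  zero_mem' := ⟨0, 0, 0, fun x => by simp⟩
  add_mem' := by
    rintro f g ⟨A, b, c, hf⟩ ⟨A', b', c', hg⟩
    refine ⟨A + A', b + b', c + c', fun x => ?_⟩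
    simp only [Pi.add_apply, hf, hg, Matrix.add_apply, add_mul, Finset.sum_add_distrib]
    ring
  smul_mem' := by
    rintro r f ⟨A, b, c, hf⟩
    refine ⟨r • A, r • b, r • c, fun x => ?_⟩
    simp only [Pi.smul_apply, hf, Matrix.smul_apply, smul_eq_mul, mul_add, Finset.mul_sum]
    ring

/-- For a nondegenerate Gaussian `N(μ, Σ)`, the linear span of the Steinalized
linear and constant features, together with the constant function 1, is exactly
the set `Poly(2)` of polynomials of total degree at most 2. -/
theorem gaussian_stein_matching_set_eq_poly2
    (d : ℕ) (μ : Fin d → ℝ) (S : Matrix (Fin d) (Fin d) ℝ)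
    (hS : S.PosDef) :
    (Submodule.span ℝ
      (((Set.range fun jk : Fin d × Fin d => fun x : Fin d → ℝ =>
          (S⁻¹.mulVec (μ - x)) jk.1 * x jk.2 + (if jk.1 = jk.2 then (1 : ℝ) else 0))
        ∪ (Set.range fun j : Fin d => fun x : Fin d → ℝ => (S⁻¹.mulVec (μ - x)) j))
        ∪ {fun _ : Fin d → ℝ => (1 : ℝ)}) : Set ((Fin d → ℝ) → ℝ))
    = {f : (Fin d → ℝ) → ℝ |
        ∃ (A : Matrix (Fin d) (Fin d) ℝ) (b : Fin d → ℝ) (c : ℝ),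
          ∀ x : Fin d → ℝ,
            f x = (∑ i : Fin d, ∑ i' : Fin d, A i i' * x i * x i')
              + (∑ i : Fin d, b i * x i) + c} := by
  classical
  have hdet : IsUnit S.det := isUnit_iff_ne_zero.mpr (ne_of_gt hS.det_pos)
  have hSSinv : S * S⁻¹ = 1 := Matrix.mul_nonsing_inv S hdet
  set G : Set ((Fin d → ℝ) → ℝ) :=
      (((Set.range fun jk : Fin d × Fin d => fun x : Fin d → ℝ =>
          (S⁻¹.mulVec (μ - x)) jk.1 * x jk.2 + (if jk.1 = jk.2 then (1 : ℝ) else 0))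
        ∪ (Set.range fun j : Fin d => fun x : Fin d → ℝ => (S⁻¹.mulVec (μ - x)) j))
        ∪ {fun _ : Fin d → ℝ => (1 : ℝ)}) with hGdef
  have mem1 : (fun _ : Fin d → ℝ => (1 : ℝ)) ∈ Submodule.span ℝ G :=
    Submodule.subset_span (Or.inr rfl)
  have memh : ∀ j : Fin d,
      (fun x : Fin d → ℝ => (S⁻¹.mulVec (μ - x)) j) ∈ Submodule.span ℝ G :=
    fun j => Submodule.subset_span (Or.inl (Or.inr ⟨j, rfl⟩))
  have memg : ∀ jk : Fin d × Fin d,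
      (fun x : Fin d → ℝ =>
        (S⁻¹.mulVec (μ - x)) jk.1 * x jk.2 + (if jk.1 = jk.2 then (1 : ℝ) else 0))
        ∈ Submodule.span ℝ G :=
    fun jk => Submodule.subset_span (Or.inl (Or.inl ⟨jk, rfl⟩))
  -- (S⁻¹ x)_j is in the span
  have memTx : ∀ j : Fin d,
      (fun x : Fin d → ℝ => (S⁻¹.mulVec x) j) ∈ Submodule.span ℝ G := by
    intro j
    have heq : (fun x : Fin d → ℝ => (S⁻¹.mulVec x) j)
        = (S⁻¹.mulVec μ j) • (fun _ : Fin d → ℝ => (1 : ℝ))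
          - (fun x : Fin d → ℝ => (S⁻¹.mulVec (μ - x)) j) := by
      funext x
      simp [Matrix.mulVec_sub]
    rw [heq]
    exact Submodule.sub_mem _ (Submodule.smul_mem _ _ mem1) (memh j)
  -- x_i is in the span
  have hrecover : ∀ x : Fin d → ℝ, S.mulVec (S⁻¹.mulVec x) = x := by
    intro x
    rw [Matrix.mulVec_mulVec, hSSinv, Matrix.one_mulVec]
  have memxi : ∀ i : Fin d,
      (fun x : Fin d → ℝ => x i) ∈ Submodule.span ℝ G := by
    intro i
    have heq : (fun x : Fin d → ℝ => x i)
        = ∑ j : Fin d, (S i j) • (fun x : Fin d → ℝ => (S⁻¹.mulVec x) j) := by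
      funext x
      have := congrFun (hrecover x) i
      simp only [Finset.sum_apply, Pi.smul_apply, smul_eq_mul]
      rw [← this]
      simp [Matrix.mulVec, dotProduct]
    rw [heq]
    exact Submodule.sum_mem _ fun j _ => Submodule.smul_mem _ _ (memTx j)
  -- (S⁻¹ x)_j * x_k is in the span
  have memTxx : ∀ j k : Fin d,
      (fun x : Fin d → ℝ => (S⁻¹.mulVec x) j * x k) ∈ Submodule.span ℝ G := by
    intro j k
    have heq : (fun x : Fin d → ℝ => (S⁻¹.mulVec x) j * x k)
        = (S⁻¹.mulVec μ j) • (fun x : Fin d → ℝ => x k)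
          + (if j = k then (1 : ℝ) else 0) • (fun _ : Fin d → ℝ => (1 : ℝ))
          - (fun x : Fin d → ℝ =>
              (S⁻¹.mulVec (μ - x)) j * x k + (if j = k then (1 : ℝ) else 0)) := by
      funext x
      by_cases h : j = k <;> simp [Matrix.mulVec_sub, h] <;> ring
    rw [heq]
    exact Submodule.sub_mem _
      (Submodule.add_mem _ (Submodule.smul_mem _ _ (memxi k))
        (Submodule.smul_mem _ _ mem1))
      (memg (j, k))
  -- x_i * x_k is in the span
  have memxx : ∀ i k : Fin d,
      (fun x : Fin d → ℝ => x i * x k) ∈ Submodule.span ℝ G := by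
    intro i k
    have heq : (fun x : Fin d → ℝ => x i * x k)
        = ∑ j : Fin d, (S i j) • (fun x : Fin d → ℝ => (S⁻¹.mulVec x) j * x k) := by
      funext x
      have := congrFun (hrecover x) i
      simp only [Finset.sum_apply, Pi.smul_apply, smul_eq_mul]
      calc x i * x k = S.mulVec (S⁻¹.mulVec x) i * x k := by rw [this]
        _ = (∑ j : Fin d, S i j * (S⁻¹.mulVec x) j) * x k := by
            simp [Matrix.mulVec, dotProduct]
        _ = ∑ j : Fin d, S i j * ((S⁻¹.mulVec x) j * x k) := by
            rw [Finset.sum_mul]; exact Finset.sum_congr rfl fun j _ => by ring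
    rw [heq]
    exact Submodule.sum_mem _ fun j _ => Submodule.smul_mem _ _ (memTxx j k)
  have hmain : Submodule.span ℝ G = poly2Submodule d := by
    apply le_antisymm
    · rw [Submodule.span_le]
      rintro f (hf | hf)
      · rcases hf with ⟨⟨j, k⟩, rfl⟩ | ⟨j, rfl⟩
        · refine ⟨fun i i' => if i' = k then -(S⁻¹ j i) else 0,
            fun i => if i = k then S⁻¹.mulVec μ j else 0,
            if j = k then (1 : ℝ) else 0, fun x => ?_⟩
          simp only [ite_mul, zero_mul, neg_mul, Finset.sum_ite_eq',
            Finset.mem_univ, if_true, Matrix.mulVec_sub, Pi.sub_apply]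
          simp [Matrix.mulVec, dotProduct, sub_mul, Finset.sum_sub_distrib,
            Finset.sum_mul, Finset.sum_neg_distrib]
          ring
        · refine ⟨0, fun i => -(S⁻¹ j i), S⁻¹.mulVec μ j, fun x => ?_⟩
          simp only [Matrix.mulVec_sub, Pi.sub_apply, Matrix.mulVec, dotProduct,
            Matrix.zero_apply, zero_mul, Finset.sum_const_zero, zero_add, mul_sub]
          rw [Finset.sum_sub_distrib]
          simp [neg_mul, Finset.sum_neg_distrib, sub_eq_add_neg, add_comm]
      · rcases hf with rfl
        exact ⟨0, 0, 1, fun x => by simp⟩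
    · rintro f ⟨A, b, c, hf⟩
      have heq : f = (∑ i : Fin d, ∑ i' : Fin d,
            (A i i') • (fun x : Fin d → ℝ => x i * x i'))
          + (∑ i : Fin d, (b i) • (fun x : Fin d → ℝ => x i))
          + c • (fun _ : Fin d → ℝ => (1 : ℝ)) := by
        funext x
        simp [hf, Finset.sum_apply, mul_assoc]
      rw [heq]
      refine Submodule.add_mem _ (Submodule.add_mem _ ?_ ?_) ?_
      · exact Submodule.sum_mem _ fun i _ => Submodule.sum_mem _ fun i' _ =>
          Submodule.smul_mem _ _ (memxx i i')
      · exact Submodule.sum_mem _ fun i _ => Submodule.smul_mem _ _ (memxi i)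
      · exact Submodule.smul_mem _ _ mem1
  exact congrArg SetLike.coe hmain
end

section
/- Let q be a probability distribution and let x' = x + ε f(x) for x ∼ q define the pushforward q_{[f]}, where f is smooth and bounded with bounded derivatives. Under sufficient regularity, the derivative of KL(q_{[f]} ‖ p) with respect to ε at ε = 0 equals −E_{x∼q}[⟨∇ log p(x), f(x)⟩ + div f(x)] = −E_q[A_pᵀ f]. -/
open MeasureTheory Filter

/-- First-order decrease of the KL divergence under the perturbation
`x ↦ x + ε f(x)` (one-dimensional version): the derivative of
`ε ↦ KL(q_{[f]} ‖ p)` at `ε = 0` equals `-E_q[∇log p · f + f']`.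
Here `KL(μ ‖ ν) = ∫ log (dμ/dν) dμ` is expressed via the Radon–Nikodym
derivative. -/
theorem kl_derivative_stein_operator
    (q p f : ℝ → ℝ)
    (hq_smooth : ContDiff ℝ (⊤ : ℕ∞) q) (hp_smooth : ContDiff ℝ (⊤ : ℕ∞) p)
    (hq_pos : ∀ x, 0 < q x) (hp_pos : ∀ x, 0 < p x)
    (hq_dens : ∫ x, q x = 1) (hp_dens : ∫ x, p x = 1)
    (hf_smooth : ContDiff ℝ (⊤ : ℕ∞) f) (hf_supp : HasCompactSupport f)
    (h_int : Integrable (fun x => (deriv (Real.log ∘ p) x * f x + deriv f x) * q x))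
    (h_kl_fin : Integrable (fun x => Real.log (q x / p x) * q x)) :
    HasDerivAt
      (fun ε : ℝ =>
        ∫ y, Real.log
            ((((volume.withDensity (fun x => ENNReal.ofReal (q x))).map
                (fun x => x + ε * f x)).rnDeriv
              (volume.withDensity (fun x => ENNReal.ofReal (p x))) y).toReal)
          ∂((volume.withDensity (fun x => ENNReal.ofReal (q x))).map
              (fun x => x + ε * f x)))
      (-(∫ x, (deriv (Real.log ∘ p) x * f x + deriv f x) * q x))
      0 := by
  have hq_cont : Continuous q := hq_smooth.continuous
  have hp_cont : Continuous p := hp_smooth.continuous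
  have hf_cont : Continuous f := hf_smooth.continuous
  have hp_diff : Differentiable ℝ p := hp_smooth.differentiable (by simp)
  have hf_diff : Differentiable ℝ f := hf_smooth.differentiable (by simp)
  have hf'_cont : Continuous (deriv f) := hf_smooth.continuous_deriv (by simp)
  have hp'_cont : Continuous (deriv p) := hp_smooth.continuous_deriv (by simp)
  have hf'_supp : HasCompactSupport (deriv f) := hf_supp.deriv
  have hlogp : ∀ y, HasDerivAt (Real.log ∘ p) (deriv p y / p y) y := fun y =>
    ((hp_diff y).hasDerivAt.log (hp_pos y).ne')
  have hlogp' : ∀ y, deriv (Real.log ∘ p) y = deriv p y / p y := fun y => (hlogp y).deriv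
  have hlogp_cont : Continuous (deriv (Real.log ∘ p)) := by
    rw [funext hlogp']
    exact hp'_cont.div hp_cont (fun y => (hp_pos y).ne')
  obtain ⟨C, hC⟩ := hf'_supp.exists_bound_of_continuous hf'_cont
  obtain ⟨Mf, hMf⟩ := hf_supp.exists_bound_of_continuous hf_cont
  have hC0 : 0 ≤ C := le_trans (norm_nonneg _) (hC 0)
  have hMf0 : 0 ≤ Mf := le_trans (norm_nonneg _) (hMf 0)
  set δ : ℝ := (2 * (C + 1))⁻¹ with hδdef
  have hδpos : 0 < δ := by positivity
  -- key positivity of 1 + ε f'(x)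
  have hT'pos : ∀ ε ∈ Metric.ball (0:ℝ) δ, ∀ x, (1:ℝ)/2 < 1 + ε * deriv f x := by
    intro ε hε x
    have hεlt : |ε| < δ := by simpa [Real.dist_eq] using hε
    have h1 : |ε * deriv f x| ≤ |ε| * C := by
      rw [abs_mul]
      exact mul_le_mul_of_nonneg_left (by simpa using hC x) (abs_nonneg ε)
    have h2 : |ε| * C < 1/2 := by
      have : |ε| * C ≤ δ * C := mul_le_mul_of_nonneg_right hεlt.le hC0
      have hδC : δ * (C + 1) ≤ 1/2 := by
        rw [hδdef]
        rw [inv_mul_le_iff₀ (by positivity)]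
        nlinarith
      nlinarith
    have := neg_abs_le (ε * deriv f x)
    nlinarith
  -- the nice parametric family
  set Φ : ℝ → ℝ → ℝ := fun ε x =>
    (Real.log (q x / p x) - (Real.log (p (x + ε * f x)) - Real.log (p x))
      - Real.log (1 + ε * deriv f x)) * q x with hΦdef
  set F' : ℝ → ℝ → ℝ := fun ε x =>
    -((deriv (Real.log ∘ p) (x + ε * f x) * f x + deriv f x / (1 + ε * deriv f x)) * q x)
    with hF'def
  -- derivative of the nice family

  have key : HasDerivAt (fun ε => ∫ x, Φ ε x) (∫ x, F' 0 x) 0 := by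
    -- bound for the derivative
    set K : Set ℝ := Metric.cthickening (δ * Mf) (tsupport f) with hKdef
    have hK_comp : IsCompact K := hf_supp.cthickening
    obtain ⟨M₁, hM₁⟩ := hK_comp.exists_bound_of_continuousOn hlogp_cont.continuousOn
    set M₂ : ℝ := max M₁ 0 with hM₂def
    have hM₂ : ∀ y ∈ K, |deriv (Real.log ∘ p) y| ≤ M₂ := fun y hy =>
      le_trans (by simpa using hM₁ y hy) (le_max_left _ _)
    set bound : ℝ → ℝ := fun x => (M₂ * |f x| + 2 * |deriv f x|) * q x with hbdef
    have h_bound : ∀ᵐ x ∂(volume : Measure ℝ), ∀ ε ∈ Metric.ball (0:ℝ) δ,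
        ‖F' ε x‖ ≤ bound x := by
      refine Eventually.of_forall fun x => fun ε hε => ?_
      have hT' := hT'pos ε hε x
      have hεlt : |ε| < δ := by simpa [Real.dist_eq] using hε
      have hA : |deriv (Real.log ∘ p) (x + ε * f x) * f x| ≤ M₂ * |f x| := by
        rcases eq_or_ne (f x) 0 with h0 | h0
        · simp [h0]
        · have hxsupp : x ∈ tsupport f := subset_tsupport f h0
          have hmem : x + ε * f x ∈ K := by
            refine Metric.mem_cthickening_of_dist_le _ x _ _ hxsupp ?_
            rw [Real.dist_eq]
            have : |x + ε * f x - x| = |ε| * |f x| := by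
              rw [add_sub_cancel_left, abs_mul]
            rw [this]
            have h1 : |ε| * |f x| ≤ δ * Mf :=
              mul_le_mul hεlt.le (by simpa using hMf x) (abs_nonneg _) hδpos.le
            exact h1
          rw [abs_mul]
          exact mul_le_mul_of_nonneg_right (hM₂ _ hmem) (abs_nonneg _)
      have hB : |deriv f x / (1 + ε * deriv f x)| ≤ 2 * |deriv f x| := by
        have hpos : (0:ℝ) < 1 + ε * deriv f x := by linarith
        rw [abs_div, abs_of_pos hpos, div_le_iff₀ hpos]
        nlinarith [mul_nonneg (abs_nonneg (deriv f x))
          (by linarith : (0:ℝ) ≤ 2 * (1 + ε * deriv f x) - 1)]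
      have hqx := (hq_pos x).le
      rw [hF'def]
      simp only [Real.norm_eq_abs, abs_neg, abs_mul, abs_of_nonneg hqx]
      refine mul_le_mul_of_nonneg_right ?_ hqx
      calc |deriv (Real.log ∘ p) (x + ε * f x) * f x + deriv f x / (1 + ε * deriv f x)|
          ≤ |deriv (Real.log ∘ p) (x + ε * f x) * f x| + |deriv f x / (1 + ε * deriv f x)| :=
            abs_add_le _ _
        _ ≤ M₂ * |f x| + 2 * |deriv f x| := add_le_add hA hB
    have hb_int : Integrable bound := by
      have hg_supp : HasCompactSupport (fun x => M₂ * |f x| + 2 * |deriv f x|) := by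
        have h1 : HasCompactSupport (fun x => M₂ * |f x|) := by
          have := hf_supp.comp_left (g := fun t : ℝ => M₂ * |t|) (by simp)
          exact this
        have h2 : HasCompactSupport (fun x => 2 * |deriv f x|) := by
          have := hf'_supp.comp_left (g := fun t : ℝ => 2 * |t|) (by simp)
          exact this
        exact h1.add h2
      have hg_cont : Continuous (fun x => M₂ * |f x| + 2 * |deriv f x|) :=
        (continuous_const.mul hf_cont.abs).add (continuous_const.mul hf'_cont.abs)
      exact (hg_cont.mul hq_cont).integrable_of_hasCompactSupport (hg_supp.mul_right)
    have hF_int : Integrable (Φ 0) := by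
      have : Φ 0 = fun x => Real.log (q x / p x) * q x := by
        funext x
        simp [hΦdef]
      rw [this]; exact h_kl_fin
    have hF_meas : ∀ᶠ ε in nhds (0:ℝ), AEStronglyMeasurable (Φ ε) volume := by
      refine Eventually.of_forall fun ε => ?_
      have m1 : Measurable fun x => Real.log (q x / p x) :=
        Real.measurable_log.comp (hq_cont.measurable.div hp_cont.measurable)
      have m2 : Measurable fun x => Real.log (p (x + ε * f x)) :=
        Real.measurable_log.comp (hp_cont.comp
          (continuous_id.add (continuous_const.mul hf_cont))).measurable
      have m3 : Measurable fun x => Real.log (p x) :=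
        Real.measurable_log.comp hp_cont.measurable
      have m4 : Measurable fun x => Real.log (1 + ε * deriv f x) :=
        Real.measurable_log.comp
          (continuous_const.add (continuous_const.mul hf'_cont)).measurable
      exact (((m1.sub (m2.sub m3)).sub m4).mul hq_cont.measurable).aestronglyMeasurable
    have hF'_meas : AEStronglyMeasurable (F' 0) volume := by
      have : Continuous (F' 0) := by
        refine (((hlogp_cont.comp ?_).mul hf_cont).add
          (hf'_cont.div (continuous_const.add (continuous_const.mul hf'_cont)) ?_)).mul
            hq_cont |>.neg
        · exact continuous_id.add (continuous_const.mul hf_cont)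
        · intro x
          have := hT'pos 0 (Metric.mem_ball_self hδpos) x
          simp only [Pi.add_apply, Pi.mul_apply]
          linarith
      exact this.aestronglyMeasurable
    have h_diff : ∀ᵐ x ∂(volume : Measure ℝ), ∀ ε ∈ Metric.ball (0:ℝ) δ,
        HasDerivAt (fun ε => Φ ε x) (F' ε x) ε := by
      refine Eventually.of_forall fun x => fun ε hε => ?_
      have hT' := hT'pos ε hε x
      have h1 : HasDerivAt (fun ε : ℝ => x + ε * f x) (f x) ε := by
        simpa using ((hasDerivAt_id ε).mul_const (f x)).const_add x
      have h2 : HasDerivAt (fun ε : ℝ => Real.log (p (x + ε * f x)))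
          (deriv p (x + ε * f x) * f x / p (x + ε * f x)) ε := by
        exact ((hp_diff _).hasDerivAt.comp ε h1).log (hp_pos _).ne'
      have h3 : HasDerivAt (fun ε : ℝ => Real.log (1 + ε * deriv f x))
          (deriv f x / (1 + ε * deriv f x)) ε := by
        have h3' : HasDerivAt (fun ε : ℝ => 1 + ε * deriv f x) (deriv f x) ε := by
          simpa using ((hasDerivAt_id ε).mul_const (deriv f x)).const_add 1
        simpa using h3'.log (by linarith)
      have hcomb := (((hasDerivAt_const ε (Real.log (q x / p x))).sub
        (h2.sub_const (Real.log (p x)))).sub h3).mul_const (q x)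
      have heq : F' ε x = (0 - deriv p (x + ε * f x) * f x / p (x + ε * f x)
          - deriv f x / (1 + ε * deriv f x)) * q x := by
        rw [hF'def]
        simp only
        rw [hlogp']
        ring
      rw [heq]
      exact hcomb
    exact (hasDerivAt_integral_of_dominated_loc_of_deriv_le (Metric.ball_mem_nhds 0 hδpos) hF_meas hF_int hF'_meas
      h_bound hb_int h_diff).2
  have hF'0 : ∫ x, F' 0 x = -(∫ x, (deriv (Real.log ∘ p) x * f x + deriv f x) * q x) := by
    rw [← integral_neg]
    congr 1
    funext x
    simp [hF'def]
  -- eventual equality of the KL function with the nice family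
  have hev : ∀ ε ∈ Metric.ball (0:ℝ) δ,
      (∫ y, Real.log
            ((((volume.withDensity (fun x => ENNReal.ofReal (q x))).map
                (fun x => x + ε * f x)).rnDeriv
              (volume.withDensity (fun x => ENNReal.ofReal (p x))) y).toReal)
          ∂((volume.withDensity (fun x => ENNReal.ofReal (q x))).map
              (fun x => x + ε * f x))) = ∫ x, Φ ε x := by
    intro ε hε
    have hT'half : ∀ x, (1:ℝ)/2 < 1 + ε * deriv f x := hT'pos ε hε
    have hT'pos' : ∀ x, (0:ℝ) < 1 + ε * deriv f x := fun x => by linarith [hT'half x]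
    have hT'ne : ∀ x, (1 + ε * deriv f x) ≠ 0 := fun x => (hT'pos' x).ne'
    set T : ℝ → ℝ := fun x => x + ε * f x with hTdef
    have hT_deriv : ∀ x, HasDerivAt T (1 + ε * deriv f x) x := fun x =>
      (hasDerivAt_id x).add ((hf_diff x).hasDerivAt.const_mul ε)
    have hT_cont : Continuous T := continuous_id.add (continuous_const.mul hf_cont)
    have hT_mono : StrictMono T := strictMono_of_deriv_pos fun x => by
      rw [(hT_deriv x).deriv]; exact hT'pos' x
    have hεM : ∀ x, |ε * f x| ≤ δ * Mf := by
      intro x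
      have hεlt : |ε| < δ := by simpa [Real.dist_eq] using hε
      rw [abs_mul]
      exact mul_le_mul hεlt.le (by simpa using hMf x) (abs_nonneg _) hδpos.le
    have hT_surj : Function.Surjective T := by
      intro y
      have h1 : T (y - (δ * Mf + 1)) ≤ y := by
        have h1a := le_abs_self (ε * f (y - (δ * Mf + 1)))
        have h1b := hεM (y - (δ * Mf + 1))
        simp only [hTdef]
        linarith
      have h2 : y ≤ T (y + (δ * Mf + 1)) := by
        have h2a := neg_abs_le (ε * f (y + (δ * Mf + 1)))
        have h2b := hεM (y + (δ * Mf + 1))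
        simp only [hTdef]
        linarith
      have hle : y - (δ * Mf + 1) ≤ y + (δ * Mf + 1) := by nlinarith
      obtain ⟨x, _, hx⟩ := intermediate_value_Icc hle hT_cont.continuousOn ⟨h1, h2⟩
      exact ⟨x, hx⟩
    set S : ℝ → ℝ := ⇑(StrictMono.orderIsoOfSurjective T hT_mono hT_surj).symm with hSdef
    have hST : ∀ x, S (T x) = x := by
      intro x
      have h1 : (StrictMono.orderIsoOfSurjective T hT_mono hT_surj) x = T x :=
        congrFun (StrictMono.coe_orderIsoOfSurjective T hT_mono hT_surj) x
      rw [hSdef, ← h1, OrderIso.symm_apply_apply]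
    have hS_cont : Continuous S :=
      OrderIso.continuous (StrictMono.orderIsoOfSurjective T hT_mono hT_surj).symm
    -- the density of the pushforward measure
    have hqS_cont : Continuous fun y => q (S y) / (1 + ε * deriv f (S y)) :=
      (hq_cont.comp hS_cont).div
        ((continuous_const.add (continuous_const.mul hf'_cont)).comp hS_cont)
        (fun y => hT'ne (S y))
    set w : ℝ → ENNReal := fun y => ENNReal.ofReal (q (S y) / (1 + ε * deriv f (S y)))
      with hwdef
    have hw_meas : Measurable w := hqS_cont.measurable.ennreal_ofReal
    have hmap : (volume.withDensity (fun x => ENNReal.ofReal (q x))).map T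
        = volume.withDensity w := by
      refine Measure.ext fun s hs => ?_
      rw [Measure.map_apply hT_cont.measurable hs,
        withDensity_apply _ (hT_cont.measurable hs), withDensity_apply _ hs]
      have himg : T '' (T ⁻¹' s) = s := Set.image_preimage_eq s hT_surj
      conv_rhs => rw [← himg]
      rw [lintegral_image_eq_lintegral_abs_det_fderiv_mul volume (hT_cont.measurable hs)
        (fun x _ => ((hT_deriv x).hasFDerivAt).hasFDerivWithinAt)
        (hT_mono.injective.injOn) w]
      refine setLIntegral_congr_fun (hT_cont.measurable hs)
        (fun x _ => ?_)
      rw [ContinuousLinearMap.det_toSpanSingleton, hwdef]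
      simp only [hST x]
      rw [abs_of_pos (hT'pos' x), ← ENNReal.ofReal_mul (hT'pos' x).le]
      congr 1
      field_simp [hT'ne x]
    -- the reference measure is finite
    have hp_int : Integrable p := by
      by_contra hcon
      rw [integral_undef hcon] at hp_dens
      exact one_ne_zero hp_dens.symm
    have hν_lint : ∫⁻ x, ENNReal.ofReal (p x) = 1 := by
      rw [← ofReal_integral_eq_lintegral_ofReal hp_int
        (Eventually.of_forall fun x => (hp_pos x).le), hp_dens, ENNReal.ofReal_one]
    haveI hν_fin : IsFiniteMeasure (volume.withDensity fun x => ENNReal.ofReal (p x)) :=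
      isFiniteMeasure_withDensity (by rw [hν_lint]; exact ENNReal.one_ne_top)
    -- the Radon–Nikodym derivative
    have hh_cont : Continuous fun y => q (S y) / ((1 + ε * deriv f (S y)) * p y) :=
      (hq_cont.comp hS_cont).div
        ((((continuous_const.add (continuous_const.mul hf'_cont)).comp hS_cont)).mul hp_cont)
        (fun y => mul_ne_zero (hT'ne (S y)) (hp_pos y).ne')
    set h : ℝ → ENNReal := fun y =>
      ENNReal.ofReal (q (S y) / ((1 + ε * deriv f (S y)) * p y)) with hhdef
    have hh_meas : Measurable h := hh_cont.measurable.ennreal_ofReal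
    have hνh : volume.withDensity w
        = (volume.withDensity fun x => ENNReal.ofReal (p x)).withDensity h := by
      rw [← withDensity_mul _ (hp_cont.measurable.ennreal_ofReal) hh_meas]
      congr 1
      funext y
      simp only [Pi.mul_apply, hhdef, hwdef]
      rw [← ENNReal.ofReal_mul (hp_pos y).le]
      congr 1
      field_simp [(hp_pos y).ne', hT'ne (S y)]
    have hac : ((volume.withDensity fun x => ENNReal.ofReal (q x)).map T)
        ≪ (volume.withDensity fun x => ENNReal.ofReal (p x)) := by
      rw [hmap, hνh]; exact withDensity_absolutelyContinuous _ _
    have hrn : ((volume.withDensity fun x => ENNReal.ofReal (q x)).map T).rnDeriv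
        (volume.withDensity fun x => ENNReal.ofReal (p x))
        =ᵐ[(volume.withDensity fun x => ENNReal.ofReal (q x)).map T] h := by
      have h1 := Measure.rnDeriv_withDensity
        (volume.withDensity fun x => ENNReal.ofReal (p x)) hh_meas
      rw [← hνh, ← hmap] at h1
      exact h1.filter_mono hac.ae_le
    -- rewrite the KL integral
    have hhpos : ∀ y, 0 < q (S y) / ((1 + ε * deriv f (S y)) * p y) := fun y =>
      div_pos (hq_pos _) (mul_pos (hT'pos' _) (hp_pos _))
    have e1 : (∫ y, Real.log
          ((((volume.withDensity fun x => ENNReal.ofReal (q x)).map T).rnDeriv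
            (volume.withDensity fun x => ENNReal.ofReal (p x)) y).toReal)
          ∂((volume.withDensity fun x => ENNReal.ofReal (q x)).map T))
        = ∫ y, Real.log (q (S y) / ((1 + ε * deriv f (S y)) * p y))
          ∂((volume.withDensity fun x => ENNReal.ofReal (q x)).map T) := by
      refine integral_congr_ae (hrn.mono fun y hy => ?_)
      dsimp only
      rw [hy, hhdef]
      simp only
      rw [ENNReal.toReal_ofReal (hhpos y).le]
    have hG_cont : Continuous fun y =>
        Real.log (q (S y) / ((1 + ε * deriv f (S y)) * p y)) :=
      hh_cont.log fun y => (hhpos y).ne'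
    have e2 : (∫ y, Real.log (q (S y) / ((1 + ε * deriv f (S y)) * p y))
          ∂((volume.withDensity fun x => ENNReal.ofReal (q x)).map T))
        = ∫ x, Real.log (q (S (T x)) / ((1 + ε * deriv f (S (T x))) * p (T x)))
          ∂(volume.withDensity fun x => ENNReal.ofReal (q x)) :=
      integral_map hT_cont.measurable.aemeasurable hG_cont.aestronglyMeasurable
    have e3 : (∫ x, Real.log (q (S (T x)) / ((1 + ε * deriv f (S (T x))) * p (T x)))
          ∂(volume.withDensity fun x => ENNReal.ofReal (q x)))
        = ∫ x, q x * Real.log (q x / ((1 + ε * deriv f x) * p (T x))) := by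
      have hqd : (volume.withDensity fun x => ENNReal.ofReal (q x))
          = volume.withDensity fun x => ((q x).toNNReal : ENNReal) := rfl
      rw [hqd, integral_withDensity_eq_integral_smul hq_cont.measurable.real_toNNReal]
      refine integral_congr_ae (Eventually.of_forall fun x => ?_)
      simp only [hST x, NNReal.smul_def, Real.coe_toNNReal _ (hq_pos x).le, smul_eq_mul]
    have e4 : (∫ x, q x * Real.log (q x / ((1 + ε * deriv f x) * p (T x))))
        = ∫ x, Φ ε x := by
      refine integral_congr_ae (Eventually.of_forall fun x => ?_)
      rw [hΦdef]
      simp only [hTdef]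
      rw [Real.log_div (hq_pos x).ne' (mul_ne_zero (hT'ne x) (hp_pos _).ne'),
        Real.log_mul (hT'ne x) (hp_pos _).ne',
        Real.log_div (hq_pos x).ne' (hp_pos x).ne']
      ring
    rw [e1, e2, e3, e4]
  rw [← hF'0]
  refine key.congr_of_eventuallyEq ?_
  filter_upwards [Metric.ball_mem_nhds (0:ℝ) hδpos] with ε hε
  exact hev ε hε
end
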